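/- Let K be a field of characteristic zero. Identify the Witt vertex Lie algebra K[T]·L with the polynomial ring K[T], so that the λ-bracket of q = q(T) ∈ K[T] with the generator L is q_λ L = q(−λ)·(T + 2λ) ∈ K[T][λ]. Suppose I ⊆ K[T] is a K[T]-submodule (an ideal of the polynomial ring) such that for every q ∈ I, every coefficient of the polynomial q(−λ)·(T + 2λ) with respect to powers of λ belongs to I. If I ≠ 0, then I = K[T]. (Hence the Witt vertex Lie algebra is simple: it is non-abelian and has no ideals other than 0 and itself.) -/

import Mathlib

/-- The `λ`-bracket `q(T)L ↦ (q(T)L)_λ L = q(−λ)·(T + 2λ)·L` of the Witt vertex Lie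
algebra `K[T]·L ≅ K[T]`, as a polynomial in the outer variable `λ` with coefficients
in `K[T]`: `wittBracket q = q(−λ)·(T + 2λ)`. -/
noncomputable def wittBracket {K : Type*} [Field K] (q : Polynomial K) :
    Polynomial (Polynomial K) :=
  (Polynomial.aeval (-(Polynomial.X : Polynomial (Polynomial K))) q) *
    (Polynomial.C Polynomial.X + 2 * Polynomial.X)

/-! For `q ≠ 0` of degree `n`, the top `λ`-coefficient of `q(−λ)·(T + 2λ)`, at `λ^(n+1)`, is the
constant `2·(−1)ⁿ·lc(q)`, a unit of `K[T]` in characteristic zero; so an ideal containing `q`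
contains a unit. -/

open Polynomial

theorem aeval_neg_X_eq_comp_map_C {R : Type*} [CommRing R] (q : R[X]) :
    aeval (-X : R[X][X]) q = (q.map C).comp (-X) := by
  rw [comp_eq_aeval, aeval_def, aeval_def, eval₂_map]
  rfl

theorem coeff_wittBracket_natDegree_succ {K : Type*} [Field K] (q : K[X]) :
    (wittBracket q).coeff (q.natDegree + 1) = C (2 * (-1) ^ q.natDegree * q.leadingCoeff) := by
  set A := (q.map C).comp (-X : K[X][X])
  have hdeg : A.natDegree = q.natDegree := by simp [A, natDegree_comp]
  have hlead : A.coeff q.natDegree = (-1) ^ q.natDegree * C q.leadingCoeff := by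
    rw [← hdeg, coeff_natDegree, comp_neg_X_leadingCoeff_eq, hdeg]; simp
  have hsplit : wittBracket q = A * C X + A * C 2 * X := by
    rw [wittBracket, aeval_neg_X_eq_comp_map_C, map_ofNat C 2]; ring
  rw [hsplit, coeff_add, coeff_mul_C, coeff_mul_X, coeff_mul_C, hlead,
    coeff_eq_zero_of_natDegree_lt (hdeg.symm ▸ Nat.lt_succ_self _)]
  simp only [map_mul, map_pow, map_neg, map_one, map_ofNat, zero_mul, zero_add]
  ring

/-- **Simplicity of the Witt vertex Lie algebra.** If an ideal `I` of `K[T]` is closed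
under taking all `λ`-coefficients of `q(−λ)·(T + 2λ)` for `q ∈ I`, and `I ≠ 0`,
then `I = K[T]`. -/
theorem witt_vertex_lie_algebra_simple
    (K : Type*) [Field K] [CharZero K]
    (I : Ideal (Polynomial K))
    (hI : ∀ q ∈ I, ∀ j : ℕ, (wittBracket q).coeff j ∈ I)
    (hne : I ≠ ⊥) :
    I = ⊤ := by
  obtain ⟨q, hqI, hq⟩ := Submodule.exists_mem_ne_zero_of_ne_bot hne
  have hmem := hI q hqI (q.natDegree + 1)
  rw [coeff_wittBracket_natDegree_succ] at hmem
  exact I.eq_top_of_isUnit_mem hmem (isUnit_C.mpr (IsUnit.mk0 _ (by simp [hq])))
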